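/- In Λ⊕^cbv, if 𝔪 ⇒_d 𝔰 (a lifted deep step, i.e., only non-surface β_v-steps are performed), then the associated distributions satisfy μ(𝒱) = σ(𝒱) and μ(𝐕) = σ(𝐕) for every β_v-equivalence class of values 𝐕. -/

import Mathlib

open scoped NNReal ENNReal

/-- A (raw) multidistribution on `X`: a finite multiset of weighted elements. -/
abbrev MDist (X : Type) := Multiset (ℝ≥0 × X)

namespace MDist

/-- Scalar multiplication of a multidistribution. -/
def scale {X : Type} (p : ℝ≥0) (m : MDist X) : MDist X :=
  m.map fun q => (p * q.1, q.2)

/-- The singleton multidistribution `[1 M]`. -/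
def single {X : Type} (M : X) : MDist X := {(1, M)}

/-- A multidistribution is proper when every weight lies in `(0,1]` and the
weights sum to at most `1`. -/
def Proper {X : Type} (m : MDist X) : Prop :=
  (∀ q ∈ m, 0 < q.1 ∧ q.1 ≤ 1) ∧ (m.map Prod.fst).sum ≤ 1

/-- The probability that the distribution associated to a multidistribution
assigns to an event `A`. -/
noncomputable def mass {X : Type} (m : MDist X) (A : Set X) : ℝ≥0∞ :=
  (m.map fun q => A.indicator (fun _ => (q.1 : ℝ≥0∞)) q.2).sum

end MDist

/-- One component of the lifting: either keep the term or perform a step. -/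
def LiftTerm {X : Type} (r : X → MDist X → Prop) (M : X) (m : MDist X) : Prop :=
  m = MDist.single M ∨ r M m

/-- The lifting of a relation `r ⊆ X × MDist X` to a binary relation on
multidistributions. -/
inductive Lift {X : Type} (r : X → MDist X → Prop) : MDist X → MDist X → Prop
  | nil : Lift r 0 0
  | cons {p : ℝ≥0} {M : X} {m s t : MDist X} :
      LiftTerm r M m → Lift r s t → Lift r ((p, M) ::ₘ s) (MDist.scale p m + t)
/-- Terms of `Λ⊕` (de Bruijn representation). -/
inductive Term : Type
  | var : ℕ → Term
  | lam : Term → Term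
  | app : Term → Term → Term
  | choice : Term → Term → Term
deriving DecidableEq

namespace Term

/-- Shifting of de Bruijn indices above a cutoff. -/
def liftAux (c : ℕ) : Term → Term
  | var k => if k < c then var k else var (k + 1)
  | lam M => lam (liftAux (c + 1) M)
  | app M N => app (liftAux c M) (liftAux c N)
  | choice M N => choice (liftAux c M) (liftAux c N)

/-- Capture-avoiding substitution `M[N/j]`. -/
def subst : Term → ℕ → Term → Term
  | var k, j, N => if k = j then N else if j < k then var (k - 1) else var k
  | lam M, j, N => lam (subst M (j + 1) (liftAux 0 N))
  | app M P, j, N => app (subst M j N) (subst P j N)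
  | choice M P, j, N => choice (subst M j N) (subst P j N)

/-- Values: variables and abstractions. -/
inductive IsValue : Term → Prop
  | var (n : ℕ) : IsValue (var n)
  | lam (M : Term) : IsValue (lam M)

/-- `β_v`-reduction, closed under arbitrary contexts. -/
inductive BetaStep : Term → Term → Prop
  | beta {M V : Term} : IsValue V → BetaStep (app (lam M) V) (subst M 0 V)
  | appL {M M' N : Term} : BetaStep M M' → BetaStep (app M N) (app M' N)
  | appR {M N N' : Term} : BetaStep N N' → BetaStep (app M N) (app M N')
  | lam {M M' : Term} : BetaStep M M' → BetaStep (lam M) (lam M')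
  | chL {M M' N : Term} : BetaStep M M' → BetaStep (choice M N) (choice M' N)
  | chR {M N N' : Term} : BetaStep N N' → BetaStep (choice M N) (choice M N')

/-- Surface `β_v`-reduction: closure under surface contexts `S ::= □ | MS | SM`. -/
inductive SurfBetaStep : Term → Term → Prop
  | beta {M V : Term} : IsValue V → SurfBetaStep (app (lam M) V) (subst M 0 V)
  | appL {M M' N : Term} : SurfBetaStep M M' → SurfBetaStep (app M N) (app M' N)
  | appR {M N N' : Term} : SurfBetaStep N N' → SurfBetaStep (app M N) (app M N')

/-- `PlusStep M A B` holds when `M = S(P ⊕ Q)`, `A = S(P)`, `B = S(Q)` for a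
surface context `S ::= □ | MS | SM`. -/
inductive PlusStep : Term → Term → Term → Prop
  | choice {M N : Term} : PlusStep (choice M N) M N
  | appL {M A B N : Term} : PlusStep M A B → PlusStep (app M N) (app A N) (app B N)
  | appR {M N A B : Term} : PlusStep N A B → PlusStep (app M N) (app M A) (app M B)

end Term

open Term

/-- The reduction `→_{β_v} ⊆ Λ⊕ × MDST(Λ⊕)`. -/
def betaRed (M : Term) (m : MDist Term) : Prop :=
  ∃ N, BetaStep M N ∧ m = MDist.single N

/-- The probabilistic reduction `→_⊕ ⊆ Λ⊕ × MDST(Λ⊕)`. -/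
def plusRed (M : Term) (m : MDist Term) : Prop :=
  ∃ A B, PlusStep M A B ∧ m = {((1 : ℝ≥0) / 2, A), ((1 : ℝ≥0) / 2, B)}

/-- The full reduction `→ = →_{β_v} ∪ →_⊕`. -/
def red (M : Term) (m : MDist Term) : Prop := betaRed M m ∨ plusRed M m

/-- Surface reduction `→ₛ`: β_v and ⊕ rules closed under surface contexts. -/
def surfRed (M : Term) (m : MDist Term) : Prop :=
  (∃ N, SurfBetaStep M N ∧ m = MDist.single N) ∨ plusRed M m

/-- A step is deep when it is not a surface step. -/
def deepRed (M : Term) (m : MDist Term) : Prop := red M m ∧ ¬ surfRed M m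

/-- `β_v`-equivalence: reflexive-symmetric-transitive closure of β_v-reduction. -/
def BetaEq : Term → Term → Prop := Relation.EqvGen BetaStep

/-- The event `𝐕`: values β_v-equivalent to the value `V`. -/
def VClass (V : Term) : Set Term := {W | IsValue W ∧ BetaEq W V}


/-!
A deep step is a β_v-step that is not a surface step, so it fires under a `λ`, under a `⊕`, or
inside an application: it cannot turn a non-value into a value or conversely, and it stays
inside a β_v-class. A lifted step only moves each weight along such a step, so it preserves the
mass of every event closed under deep steps in both directions.
-/

namespace MDist

variable {X : Type}

@[simp]
lemma mass_cons (p : ℝ≥0) (M : X) (m : MDist X) (A : Set X) :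
    mass ((p, M) ::ₘ m) A = A.indicator (fun _ => (p : ℝ≥0∞)) M + mass m A := by
  simp [mass]

@[simp]
lemma mass_add (m s : MDist X) (A : Set X) : mass (m + s) A = mass m A + mass s A := by
  simp [mass]

@[simp]
lemma mass_scale (p : ℝ≥0) (m : MDist X) (A : Set X) : mass (scale p m) A = p * mass m A := by
  induction m using Multiset.induction_on with
  | empty => simp [scale, mass]
  | cons q m ih =>
    by_cases hq : q.2 ∈ A <;> simp_all [scale, mass, mul_add]

@[simp]
lemma mass_single (M : X) (A : Set X) : mass (single M) A = A.indicator 1 M := by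
  simp [single, mass, Pi.one_def]

end MDist

open MDist

lemma Lift.mass_eq {X : Type} {r : X → MDist X → Prop} {A : Set X}
    (hr : ∀ M m, r M m → mass m A = mass (single M) A) {m s : MDist X} (h : Lift r m s) :
    mass m A = mass s A := by
  induction h with
  | nil => rfl
  | @cons p M m' s t hstep _ ih =>
    have hm' : mass m' A = mass (single M) A := hstep.elim (congrArg (mass · A)) (hr M m')
    rw [mass_cons, mass_add, mass_scale, hm', mass_single, ih]
    by_cases hM : M ∈ A <;> simp [hM]

open Term

lemma deepRed.exists_betaStep {M : Term} {m : MDist Term} (h : deepRed M m) :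
    ∃ P, BetaStep M P ∧ ¬ SurfBetaStep M P ∧ m = single P := by
  obtain ⟨hbeta | hplus, hsurf⟩ := h
  · obtain ⟨P, hP, rfl⟩ := hbeta
    exact ⟨P, hP, fun hs => hsurf (Or.inl ⟨P, hs, rfl⟩), rfl⟩
  · exact absurd (Or.inr hplus) hsurf

lemma deepRed.mass_eq {A : Set Term}
    (hA : ∀ ⦃M P⦄, BetaStep M P → ¬ SurfBetaStep M P → (M ∈ A ↔ P ∈ A))
    {M : Term} {m : MDist Term} (h : deepRed M m) : mass m A = mass (single M) A := by
  obtain ⟨P, hP, hsurf, rfl⟩ := h.exists_betaStep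
  by_cases hM : M ∈ A
  · simp [hM, (hA hP hsurf).1 hM]
  · simp [hM, mt (hA hP hsurf).2 hM]

namespace Term

lemma BetaStep.isValue_iff {M P : Term} (hP : BetaStep M P) (hsurf : ¬ SurfBetaStep M P) :
    IsValue M ↔ IsValue P := by
  cases hP with
  | beta hV => exact absurd (SurfBetaStep.beta hV) hsurf
  | lam _ => exact ⟨fun _ => .lam _, fun _ => .lam _⟩
  | appL _ | appR _ | chL _ | chR _ => exact ⟨nofun, nofun⟩

lemma BetaStep.mem_vClass_iff {M P : Term} (hP : BetaStep M P) (hsurf : ¬ SurfBetaStep M P)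
    (V : Term) : M ∈ VClass V ↔ P ∈ VClass V := by
  have hMP : BetaEq M P := .rel _ _ hP
  exact and_congr (hP.isValue_iff hsurf)
    ⟨(Relation.EqvGen.symm _ _ hMP).trans _ _ _, hMP.trans _ _ _⟩

end Term

/-- Lifted deep steps preserve the probability of being a value and the
probability of every β_v-equivalence class of values. -/
theorem deep_step_preserves_value_masses (m s : MDist Term)
    (h : Lift deepRed m s) :
    MDist.mass m {M | IsValue M} = MDist.mass s {M | IsValue M} ∧
    ∀ V : Term, IsValue V → MDist.mass m (VClass V) = MDist.mass s (VClass V) := by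
  have hmass : ∀ A : Set Term,
      (∀ ⦃M P⦄, BetaStep M P → ¬ SurfBetaStep M P → (M ∈ A ↔ P ∈ A)) →
        mass m A = mass s A :=
    fun _ hA => h.mass_eq fun _ _ hd => hd.mass_eq hA
  exact ⟨hmass _ fun _ _ => BetaStep.isValue_iff,
    fun V _ => hmass _ fun _ _ hP hsurf => hP.mem_vClass_iff hsurf V⟩
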